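/- Characterization of the minimizer of the quadratic surrogate via the Moreau envelope and proximal operator (Lemma D.2). Let ℓ : ℝ×ℝ → ℝ be nonnegative, convex in its second argument, three times continuously differentiable with all first-, second- and third-order partial derivatives bounded. Fix n > 0, p ≥ 1, y ∈ ℝ, z ∈ ℝ^p with z ≠ 0, θ̂ ∈ ℝ^p, c₀ ∈ ℝ, and a symmetric positive definite matrix H ∈ ℝ^{p×p}. Define R̃(θ) := c₀ + (1/n)(ℓ(y, ⟨θ, z⟩) − ℓ(0,0)) + (1/2)(θ − θ̂)ᵀH(θ − θ̂) and γ := zᵀH^{−1}z/n > 0. Then R̃ attains a unique minimizer θ̃ ∈ ℝ^p and: (i) min_θ R̃(θ) = c₀ + (1/n)·M_y(⟨z, θ̂⟩; γ); (ii) θ̃ = θ̂ − (1/n)·∂₂ℓ(y, ⟨z, θ̃⟩)·H^{−1}z, where ∂₂ℓ denotes the partial derivative of ℓ in its second argument; (iii) ⟨z, θ̃⟩ = Prox_y(⟨z, θ̂⟩; γ). -/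

import Mathlib

/-!
Characterization of the minimizer of the quadratic surrogate via the Moreau envelope
and proximal operator (Lemma D.2).
-/

noncomputable section

open MeasureTheory

/-- Euclidean dot product on `ι → ℝ`. -/
def dotp {ι : Type*} [Fintype ι] (u v : ι → ℝ) : ℝ := ∑ i, u i * v i

/-- The Moreau envelope `M_y(z; γ) = min_x { ℓ(y,x) − ℓ(0,0) + (z−x)²/(2γ) }` of the
centered loss. -/
def Moreau (ℓ : ℝ → ℝ → ℝ) (y z γ : ℝ) : ℝ :=
  ⨅ x : ℝ, (ℓ y x - ℓ 0 0 + (z - x) ^ 2 / (2 * γ))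

/-- The quadratic surrogate objective
`R̃(θ) = c₀ + (1/n)(ℓ(y,⟨θ,z⟩) − ℓ(0,0)) + (1/2)(θ−θ̂)ᵀ H (θ−θ̂)`. -/
def quadSurrogate (p : ℕ) (n : ℕ) (ℓ : ℝ → ℝ → ℝ) (y : ℝ) (z θh : Fin p → ℝ)
    (c0 : ℝ) (H : Matrix (Fin p) (Fin p) ℝ) (θ : Fin p → ℝ) : ℝ :=
  c0 + (1 / (n : ℝ)) * (ℓ y (dotp θ z) - ℓ 0 0) +
    (1 / 2) * dotp (fun j => θ j - θh j) (H.mulVec fun j => θ j - θh j)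


/-!
Put `w = H⁻¹ z` and `q = ⟨z, w⟩ > 0`. Completing the square in the `H`-inner product along `w`
splits `(θ - θ̂)ᵀ H (θ - θ̂)` as `⟨z, θ - θ̂⟩² / q + rᵀ H r`, where `r` is the residual of `θ - θ̂`
off the line `ℝ w`. With `γ = q / n` this gives
`R̃(θ) = c₀ + (1/n) (ℓ(y, ⟨z, θ⟩) - ℓ(0,0) + (⟨z, θ̂⟩ - ⟨z, θ⟩)² / (2γ)) + ½ rᵀ H r`,
so `θ` minimizes `R̃` iff `r = 0` and `⟨z, θ⟩` minimizes the Moreau objective; that minimizer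
exists by coercivity, is unique by strict convexity, and its first-order condition is the
fixed-point formula.
-/

open Matrix Set Filter

theorem dotp_eq_dotProduct {ι : Type*} [Fintype ι] (u v : ι → ℝ) : dotp u v = u ⬝ᵥ v := rfl

def moreauObjective (ℓ : ℝ → ℝ → ℝ) (y z γ x : ℝ) : ℝ :=
  ℓ y x - ℓ 0 0 + (z - x) ^ 2 / (2 * γ)

section MoreauObjective

variable {ℓ : ℝ → ℝ → ℝ} {y a γ x : ℝ}

theorem hasDerivAt_sub_sq_div (a : ℝ) (hγ : γ ≠ 0) (x : ℝ) :
    HasDerivAt (fun t => (a - t) ^ 2 / (2 * γ)) ((x - a) / γ) x := by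
  refine ((((hasDerivAt_id' x).const_sub a).pow 2).div_const (2 * γ)).congr_deriv ?_
  field_simp
  ring

theorem strictConvexOn_sub_sq_div (a : ℝ) (hγ : 0 < γ) :
    StrictConvexOn ℝ univ (fun t => (a - t) ^ 2 / (2 * γ)) := by
  refine StrictMono.strictConvexOn_univ_of_deriv (by fun_prop) ?_
  rw [funext fun x => (hasDerivAt_sub_sq_div a hγ.ne' x).deriv]
  exact fun x x' hxx' => div_lt_div_of_pos_right (by linarith) hγ

theorem strictConvexOn_moreauObjective (hconv : ConvexOn ℝ univ (ℓ y)) (hγ : 0 < γ) :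
    StrictConvexOn ℝ univ (moreauObjective ℓ y a γ) :=
  (hconv.sub (concaveOn_const _ convex_univ)).add_strictConvexOn (strictConvexOn_sub_sq_div a hγ)

theorem exists_forall_moreauObjective_le (hcont : Continuous (ℓ y))
    (hbdd : BddBelow (range (ℓ y))) (hγ : 0 < γ) :
    ∃ x, ∀ t, moreauObjective ℓ y a γ x ≤ moreauObjective ℓ y a γ t := by
  obtain ⟨C, hC⟩ := hbdd
  refine (by unfold moreauObjective; fun_prop : Continuous (moreauObjective ℓ y a γ))
    |>.exists_forall_le ?_
  refine tendsto_atTop_add_left_of_le _ (C - ℓ 0 0)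
    (fun t => sub_le_sub_right (hC (mem_range_self t)) _) ?_
  have h := ((tendsto_pow_atTop two_ne_zero).comp
    (tendsto_dist_left_cocompact_atTop a)).atTop_div_const (by positivity : (0 : ℝ) < 2 * γ)
  simpa only [Function.comp_def, Real.dist_eq, sq_abs] using h

theorem eq_of_forall_moreauObjective_le (hconv : ConvexOn ℝ univ (ℓ y)) (hγ : 0 < γ) {x' : ℝ}
    (hx : ∀ t, moreauObjective ℓ y a γ x ≤ moreauObjective ℓ y a γ t)
    (hx' : ∀ t, moreauObjective ℓ y a γ x' ≤ moreauObjective ℓ y a γ t) : x = x' :=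
  (strictConvexOn_moreauObjective hconv hγ).eq_of_isMinOn (isMinOn_univ_iff.2 hx)
    (isMinOn_univ_iff.2 hx') trivial trivial

theorem deriv_eq_of_forall_moreauObjective_le (hd : DifferentiableAt ℝ (ℓ y) x) (hγ : γ ≠ 0)
    (hx : ∀ t, moreauObjective ℓ y a γ x ≤ moreauObjective ℓ y a γ t) :
    deriv (ℓ y) x = (a - x) / γ := by
  have hderiv : HasDerivAt (moreauObjective ℓ y a γ) (deriv (ℓ y) x + (x - a) / γ) x :=
    (hd.hasDerivAt.sub_const _).add (hasDerivAt_sub_sq_div a hγ x)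
  have := IsLocalMin.hasDerivAt_eq_zero (Eventually.of_forall hx) hderiv
  rw [← neg_sub x a, neg_div]
  linarith

theorem moreau_eq_of_forall_moreauObjective_le
    (hx : ∀ t, moreauObjective ℓ y a γ x ≤ moreauObjective ℓ y a γ t) :
    Moreau ℓ y a γ = moreauObjective ℓ y a γ x :=
  ciInf_eq_of_forall_ge_of_forall_gt_exists_lt hx fun _ h => ⟨x, h⟩

end MoreauObjective

section QuadraticForm

variable {ι : Type*} [Fintype ι] {H : Matrix ι ι ℝ} {z w : ι → ℝ}

theorem dotProduct_mulVec_self_eq_sq_div_add (hH : H.IsSymm) (hw : H *ᵥ w = z)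
    (hq : z ⬝ᵥ w ≠ 0) (δ : ι → ℝ) :
    δ ⬝ᵥ H *ᵥ δ = (z ⬝ᵥ δ) ^ 2 / (z ⬝ᵥ w) +
      (δ - (z ⬝ᵥ δ / (z ⬝ᵥ w)) • w) ⬝ᵥ H *ᵥ (δ - (z ⬝ᵥ δ / (z ⬝ᵥ w)) • w) := by
  have hwδ : w ⬝ᵥ H *ᵥ δ = z ⬝ᵥ δ := by
    rw [dotProduct_mulVec, ← mulVec_transpose, hH.eq, hw]
  have hδw : δ ⬝ᵥ H *ᵥ w = z ⬝ᵥ δ := by rw [hw, dotProduct_comm]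
  have hww : w ⬝ᵥ H *ᵥ w = z ⬝ᵥ w := by rw [hw, dotProduct_comm]
  simp only [mulVec_sub, mulVec_smul, dotProduct_sub, sub_dotProduct, dotProduct_smul,
    smul_dotProduct, smul_eq_mul, hwδ, hδw, hww]
  field_simp
  ring

theorem Matrix.PosDef.dotProduct_inv_mulVec_pos [DecidableEq ι] (hH : H.PosDef) (hz : z ≠ 0) :
    0 < z ⬝ᵥ H⁻¹ *ᵥ z := by
  simpa using hH.inv.dotProduct_mulVec_pos hz

end QuadraticForm

section Surrogate

variable {p n : ℕ} {ℓ : ℝ → ℝ → ℝ} {y c0 : ℝ} {z θh : Fin p → ℝ}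
  {H : Matrix (Fin p) (Fin p) ℝ}

/-- The minimizer of the quadratic part of `quadSurrogate` on the hyperplane `⟨z, θ⟩ = x`. -/
def surrogateLift (z θh : Fin p → ℝ) (H : Matrix (Fin p) (Fin p) ℝ) (x : ℝ) : Fin p → ℝ :=
  θh + ((x - z ⬝ᵥ θh) / (z ⬝ᵥ H⁻¹ *ᵥ z)) • H⁻¹ *ᵥ z

theorem dotProduct_surrogateLift (hq : z ⬝ᵥ H⁻¹ *ᵥ z ≠ 0) (x : ℝ) :
    z ⬝ᵥ surrogateLift z θh H x = x := by
  rw [surrogateLift, dotProduct_add, dotProduct_smul, smul_eq_mul, div_mul_cancel₀ _ hq]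
  ring

theorem quadSurrogate_eq (hH : H.PosDef) (hz : z ≠ 0) (hn : n ≠ 0) (θ : Fin p → ℝ) :
    quadSurrogate p n ℓ y z θh c0 H θ =
      c0 + 1 / n * moreauObjective ℓ y (z ⬝ᵥ θh) (z ⬝ᵥ H⁻¹ *ᵥ z / n) (z ⬝ᵥ θ) +
        1 / 2 * ((θ - surrogateLift z θh H (z ⬝ᵥ θ)) ⬝ᵥ
          H *ᵥ (θ - surrogateLift z θh H (z ⬝ᵥ θ))) := by
  have hq := (hH.dotProduct_inv_mulVec_pos hz).ne'
  have hw : H *ᵥ H⁻¹ *ᵥ z = z := by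
    rw [mulVec_mulVec, mul_nonsing_inv _ ((isUnit_iff_isUnit_det H).1 hH.isUnit), one_mulVec]
  have hres : θ - surrogateLift z θh H (z ⬝ᵥ θ) =
      (θ - θh) - (z ⬝ᵥ (θ - θh) / (z ⬝ᵥ H⁻¹ *ᵥ z)) • H⁻¹ *ᵥ z := by
    rw [surrogateLift, dotProduct_sub]
    abel
  have hsurr : quadSurrogate p n ℓ y z θh c0 H θ =
      c0 + 1 / n * (ℓ y (z ⬝ᵥ θ) - ℓ 0 0) + 1 / 2 * ((θ - θh) ⬝ᵥ H *ᵥ (θ - θh)) := by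
    rw [quadSurrogate, dotp_eq_dotProduct, dotProduct_comm]
    rfl
  rw [hsurr, dotProduct_mulVec_self_eq_sq_div_add (isHermitian_iff_isSymm.1 hH.1) hw hq,
    ← hres, moreauObjective, dotProduct_sub]
  field_simp
  ring

theorem quadSurrogate_surrogateLift (hH : H.PosDef) (hz : z ≠ 0) (hn : n ≠ 0) (x : ℝ) :
    quadSurrogate p n ℓ y z θh c0 H (surrogateLift z θh H x) =
      c0 + 1 / n * moreauObjective ℓ y (z ⬝ᵥ θh) (z ⬝ᵥ H⁻¹ *ᵥ z / n) x := by
  rw [quadSurrogate_eq hH hz hn, dotProduct_surrogateLift (hH.dotProduct_inv_mulVec_pos hz).ne',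
    sub_self, zero_dotProduct, mul_zero, add_zero]

theorem moreauObjective_le_quadSurrogate (hH : H.PosDef) (hz : z ≠ 0) (hn : n ≠ 0)
    (θ : Fin p → ℝ) :
    c0 + 1 / n * moreauObjective ℓ y (z ⬝ᵥ θh) (z ⬝ᵥ H⁻¹ *ᵥ z / n) (z ⬝ᵥ θ) ≤
      quadSurrogate p n ℓ y z θh c0 H θ := by
  rw [quadSurrogate_eq hH hz hn]
  have := hH.posSemidef.dotProduct_mulVec_nonneg (θ - surrogateLift z θh H (z ⬝ᵥ θ))
  rw [star_trivial] at this
  linarith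

theorem eq_surrogateLift_of_quadSurrogate_le (hH : H.PosDef) (hz : z ≠ 0) (hn : n ≠ 0)
    {θ : Fin p → ℝ}
    (h : quadSurrogate p n ℓ y z θh c0 H θ ≤
      c0 + 1 / n * moreauObjective ℓ y (z ⬝ᵥ θh) (z ⬝ᵥ H⁻¹ *ᵥ z / n) (z ⬝ᵥ θ)) :
    θ = surrogateLift z θh H (z ⬝ᵥ θ) := by
  rw [quadSurrogate_eq hH hz hn] at h
  by_contra hne
  have := hH.dotProduct_mulVec_pos (sub_ne_zero.2 hne)
  rw [star_trivial] at this
  linarith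

theorem quadSurrogate_surrogateLift_le (hH : H.PosDef) (hz : z ≠ 0) (hn : n ≠ 0) {x : ℝ}
    (hx : ∀ t, moreauObjective ℓ y (z ⬝ᵥ θh) (z ⬝ᵥ H⁻¹ *ᵥ z / n) x ≤
      moreauObjective ℓ y (z ⬝ᵥ θh) (z ⬝ᵥ H⁻¹ *ᵥ z / n) t)
    (θ : Fin p → ℝ) :
    quadSurrogate p n ℓ y z θh c0 H (surrogateLift z θh H x) ≤
      quadSurrogate p n ℓ y z θh c0 H θ := by
  rw [quadSurrogate_surrogateLift hH hz hn]
  grw [hx (z ⬝ᵥ θ)]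
  exact moreauObjective_le_quadSurrogate hH hz hn θ

theorem eq_surrogateLift_of_forall_quadSurrogate_le (hH : H.PosDef) (hz : z ≠ 0) (hn : n ≠ 0)
    (hconv : ConvexOn ℝ univ (ℓ y)) {x : ℝ}
    (hx : ∀ t, moreauObjective ℓ y (z ⬝ᵥ θh) (z ⬝ᵥ H⁻¹ *ᵥ z / n) x ≤
      moreauObjective ℓ y (z ⬝ᵥ θh) (z ⬝ᵥ H⁻¹ *ᵥ z / n) t)
    {θ : Fin p → ℝ} (hθ : ∀ θ', quadSurrogate p n ℓ y z θh c0 H θ ≤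
      quadSurrogate p n ℓ y z θh c0 H θ') :
    θ = surrogateLift z θh H x := by
  have hγ : 0 < z ⬝ᵥ H⁻¹ *ᵥ z / n :=
    div_pos (hH.dotProduct_inv_mulVec_pos hz) (Nat.cast_pos.2 (Nat.pos_of_ne_zero hn))
  have hup := (hθ (surrogateLift z θh H x)).trans_eq (quadSurrogate_surrogateLift hH hz hn x)
  have hlow := (moreauObjective_le_quadSurrogate hH hz hn θ).trans hup
  have hθx : z ⬝ᵥ θ = x := by
    refine eq_of_forall_moreauObjective_le hconv hγ (fun t => le_trans ?_ (hx t)) hx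
    exact le_of_mul_le_mul_left (le_of_add_le_add_left hlow) (by positivity)
  rw [← hθx] at hup ⊢
  exact eq_surrogateLift_of_quadSurrogate_le hH hz hn hup

end Surrogate

theorem quadratic_surrogate_minimizer_general (p : ℕ) (n : ℕ) (hn : 0 < n)
    (ℓ : ℝ → ℝ → ℝ)
    (hℓ0 : ∀ y v : ℝ, 0 ≤ ℓ y v)
    (hℓconv : ∀ y : ℝ, ConvexOn ℝ Set.univ (ℓ y))
    (hℓsmooth : ContDiff ℝ 3 (fun q : ℝ × ℝ => ℓ q.1 q.2))
    (y : ℝ) (z : Fin p → ℝ) (hz : z ≠ 0) (θh : Fin p → ℝ) (c0 : ℝ)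
    (H : Matrix (Fin p) (Fin p) ℝ) (hH : H.PosDef) :
    0 < dotp z (H⁻¹.mulVec z) / n ∧
    ∃ θt : Fin p → ℝ,
      (∀ θ : Fin p → ℝ, quadSurrogate p n ℓ y z θh c0 H θt ≤ quadSurrogate p n ℓ y z θh c0 H θ) ∧
      (∀ θ' : Fin p → ℝ,
        (∀ θ : Fin p → ℝ, quadSurrogate p n ℓ y z θh c0 H θ' ≤ quadSurrogate p n ℓ y z θh c0 H θ) →
        θ' = θt) ∧
      (⨅ θ : Fin p → ℝ, quadSurrogate p n ℓ y z θh c0 H θ) =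
        c0 + (1 / (n : ℝ)) * Moreau ℓ y (dotp z θh) (dotp z (H⁻¹.mulVec z) / n) ∧
      θt = (fun j => θh j - (1 / (n : ℝ)) * deriv (ℓ y) (dotp z θt) * H⁻¹.mulVec z j) ∧
      (∀ x : ℝ,
        ℓ y (dotp z θt) - ℓ 0 0 +
            (dotp z θh - dotp z θt) ^ 2 / (2 * (dotp z (H⁻¹.mulVec z) / n)) ≤
          ℓ y x - ℓ 0 0 + (dotp z θh - x) ^ 2 / (2 * (dotp z (H⁻¹.mulVec z) / n))) := by
  simp only [dotp_eq_dotProduct]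
  have hq := hH.dotProduct_inv_mulVec_pos hz
  have hγ : 0 < z ⬝ᵥ H⁻¹ *ᵥ z / n := div_pos hq (Nat.cast_pos.2 hn)
  have hℓy : ContDiff ℝ 3 (ℓ y) := hℓsmooth.comp (contDiff_const.prodMk contDiff_id)
  obtain ⟨x, hx⟩ := exists_forall_moreauObjective_le (a := z ⬝ᵥ θh) hℓy.continuous
    ⟨0, forall_mem_range.2 (hℓ0 y)⟩ hγ
  have hzθt : z ⬝ᵥ surrogateLift z θh H x = x := dotProduct_surrogateLift hq.ne' x
  have hmin := quadSurrogate_surrogateLift_le (c0 := c0) hH hz hn.ne' hx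
  refine ⟨hγ, surrogateLift z θh H x, hmin,
    fun θ' hθ' => eq_surrogateLift_of_forall_quadSurrogate_le hH hz hn.ne' (hℓconv y) hx hθ',
    ?_, ?_, by simpa only [hzθt, moreauObjective] using hx⟩
  · rw [ciInf_eq_of_forall_ge_of_forall_gt_exists_lt hmin fun _ h => ⟨_, h⟩,
      quadSurrogate_surrogateLift hH hz hn.ne', moreau_eq_of_forall_moreauObjective_le hx]
  · rw [hzθt, deriv_eq_of_forall_moreauObjective_le
      ((hℓy.differentiable (by norm_num)).differentiableAt) hγ.ne' hx]
    ext j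
    simp only [surrogateLift, Pi.add_apply, Pi.smul_apply, smul_eq_mul]
    field_simp
    ring

/-- **Lemma D.2**: characterization of the minimizer of the quadratic surrogate in terms
of the Moreau envelope and the proximal operator of the loss. -/
theorem quadratic_surrogate_minimizer (p : ℕ) (hp : 1 ≤ p) (n : ℕ) (hn : 0 < n)
    (ℓ : ℝ → ℝ → ℝ)
    (hℓ0 : ∀ y v : ℝ, 0 ≤ ℓ y v)
    (hℓconv : ∀ y : ℝ, ConvexOn ℝ Set.univ (ℓ y))
    (hℓsmooth : ContDiff ℝ 3 (fun q : ℝ × ℝ => ℓ q.1 q.2))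
    (hℓbdd : ∃ C1 : ℝ, ∀ i : ℕ, 1 ≤ i → i ≤ 3 →
      ∀ q : ℝ × ℝ, ‖iteratedFDeriv ℝ i (fun q : ℝ × ℝ => ℓ q.1 q.2) q‖ ≤ C1)
    (y : ℝ) (z : Fin p → ℝ) (hz : z ≠ 0) (θh : Fin p → ℝ) (c0 : ℝ)
    (H : Matrix (Fin p) (Fin p) ℝ) (hH : H.PosDef) :
    0 < dotp z (H⁻¹.mulVec z) / n ∧
    ∃ θt : Fin p → ℝ,
      (∀ θ : Fin p → ℝ, quadSurrogate p n ℓ y z θh c0 H θt ≤ quadSurrogate p n ℓ y z θh c0 H θ) ∧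
      (∀ θ' : Fin p → ℝ,
        (∀ θ : Fin p → ℝ, quadSurrogate p n ℓ y z θh c0 H θ' ≤ quadSurrogate p n ℓ y z θh c0 H θ) →
        θ' = θt) ∧
      (⨅ θ : Fin p → ℝ, quadSurrogate p n ℓ y z θh c0 H θ) =
        c0 + (1 / (n : ℝ)) * Moreau ℓ y (dotp z θh) (dotp z (H⁻¹.mulVec z) / n) ∧
      θt = (fun j => θh j - (1 / (n : ℝ)) * deriv (ℓ y) (dotp z θt) * H⁻¹.mulVec z j) ∧
      (∀ x : ℝ,
        ℓ y (dotp z θt) - ℓ 0 0 +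
            (dotp z θh - dotp z θt) ^ 2 / (2 * (dotp z (H⁻¹.mulVec z) / n)) ≤
          ℓ y x - ℓ 0 0 + (dotp z θh - x) ^ 2 / (2 * (dotp z (H⁻¹.mulVec z) / n))) :=
  quadratic_surrogate_minimizer_general p n hn ℓ hℓ0 hℓconv hℓsmooth y z hz θh c0 H hH
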